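/- arXiv:2105.06450 — 6 statements merged into one kernel-verified Lean document; each statement's English description precedes it below -/
import Mathlib

section
/- Let R be a 2-torsion free ring and T : R → R a Jordan left centralizer, i.e., an additive map with T(x²) = T(x)x for all x ∈ R. Then T(xyx) = T(x)yx for all x, y ∈ R. -/
/-- Zalar's lemma, left version: if `R` is 2-torsion free and `T` is an additive
map with `T (x²) = T x * x`, then `T (xyx) = T x * y * x`. -/
theorem jordan_left_centralizer_xyx
    {R : Type*} [NonUnitalRing R]
    (h2 : ∀ x : R, x + x = 0 → x = 0)
    (T : R → R)
    (hadd : ∀ x y : R, T (x + y) = T x + T y)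
    (hJ : ∀ x : R, T (x * x) = T x * x) :
    ∀ x y : R, T (x * y * x) = T x * y * x := by
  have hlin : ∀ x y : R, T (x * y + y * x) = T x * y + T y * x := by
    intro x y
    have h := hJ (x + y)
    rw [show (x + y) * (x + y) = x * x + (x * y + y * x) + y * y by noncomm_ring] at h
    rw [hadd (x * x + (x * y + y * x)) (y * y), hadd (x * x) (x * y + y * x), hJ, hJ, hadd x y] at h
    have h' : T x * x + T (x * y + y * x) + T y * y
        = T x * x + (T x * y + T y * x) + T y * y := by
      rw [h]; noncomm_ring
    exact add_left_cancel (add_right_cancel h')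
  intro x y
  have h1 := hlin x (x * y + y * x)
  have e : x * (x * y + y * x) + (x * y + y * x) * x
      = ((x * x) * y + y * (x * x)) + (x * y * x + x * y * x) := by noncomm_ring
  rw [e, hadd, hlin (x * x) y, hadd (x * y * x), hJ x, hlin x y] at h1
  -- h1 : T x * x * y + T y * (x*x) + (T (x*y*x) + T (x*y*x))
  --    = T x * (x*y + y*x) + (T x * y + T y * x) * x
  have h3 : T (x * y * x) + T (x * y * x) = T x * y * x + T x * y * x := by
    have h' : (T x * x * y + T y * (x * x)) + (T (x * y * x) + T (x * y * x))
        = (T x * x * y + T y * (x * x)) + (T x * y * x + T x * y * x) := by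
      rw [h1]; noncomm_ring
    exact add_left_cancel h'
  have h4 : (T (x * y * x) - T x * y * x) + (T (x * y * x) - T x * y * x) = 0 := by
    rw [sub_add_sub_comm, h3, sub_self]
  exact sub_eq_zero.mp (h2 _ h4)
end

section
/- Let R be a 2-torsion free ring and T : R → R a Jordan right centralizer, i.e., an additive map with T(x²) = xT(x) for all x ∈ R. Then T(xy + yx) = xT(y) + yT(x) and T(xyx) = xyT(x) for all x, y ∈ R. -/
/-- Zalar's lemma, right version: if `R` is 2-torsion free and `T` is an additive
map with `T (x²) = x * T x`, then `T (xy + yx) = x * T y + y * T x` and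
`T (xyx) = x * y * T x`. -/
theorem jordan_right_centralizer_props
    {R : Type*} [NonUnitalRing R]
    (h2 : ∀ x : R, x + x = 0 → x = 0)
    (T : R → R)
    (hadd : ∀ x y : R, T (x + y) = T x + T y)
    (hJ : ∀ x : R, T (x * x) = x * T x) :
    (∀ x y : R, T (x * y + y * x) = x * T y + y * T x) ∧
    (∀ x y : R, T (x * y * x) = x * y * T x) := by
  have h1 : ∀ x y : R, T (x * y + y * x) = x * T y + y * T x := by
    intro x y
    have key := hJ (x + y)
    have e : (x + y) * (x + y) = x * x + (x * y + y * x) + (y * y) := by noncomm_ring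
    rw [e, hadd (x * x + (x * y + y * x)) (y * y), hadd (x * x) (x * y + y * x),
      hJ, hJ, hadd x y] at key
    have expand : (x + y) * (T x + T y) = x * T x + (x * T y + y * T x) + y * T y := by
      noncomm_ring
    rw [expand] at key
    exact add_left_cancel (add_right_cancel key)
  refine ⟨h1, fun x y => ?_⟩
  have e1 := h1 x (x * y + y * x)
  have e2 := h1 (x * x) y
  have e : x * (x * y + y * x) + (x * y + y * x) * x
      = (x * x * y + y * (x * x)) + (x * y * x + x * y * x) := by noncomm_ring
  rw [e, hadd (x * x * y + y * (x * x)) (x * y * x + x * y * x),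
    hadd (x * y * x) (x * y * x), e2, hJ, h1 x y] at e1
  have rhs : x * (x * T y + y * T x) + (x * y + y * x) * T x
      = (x * x * T y + y * (x * T x)) + (x * y * T x + x * y * T x) := by noncomm_ring
  rw [rhs] at e1
  have key : T (x * y * x) + T (x * y * x) = x * y * T x + x * y * T x :=
    add_left_cancel e1
  have : (T (x * y * x) - x * y * T x) + (T (x * y * x) - x * y * T x) = 0 := by
    linear_combination (norm := abel) key
  exact sub_eq_zero.mp (h2 _ this)
end

section
/- Let R be a ring and Ψ : R → R a Jordan centralizer, i.e., additive with Ψ(xy + yx) = Ψ(x)y + yΨ(x) = xΨ(y) + Ψ(y)x for all x, y ∈ R. Then [Ψ(x), x] := Ψ(x)x − xΨ(x) lies in the center Z(R) for every x ∈ R. -/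
/-- For any Jordan centralizer `Ψ` on a ring `R`, the commutator `[Ψ x, x]`
is central for every `x`. -/
theorem jordan_centralizer_commutator_central
    {R : Type*} [NonUnitalRing R]
    (Ψ : R → R)
    (hadd : ∀ x y : R, Ψ (x + y) = Ψ x + Ψ y)
    (hJ1 : ∀ x y : R, Ψ (x * y + y * x) = Ψ x * y + y * Ψ x)
    (hJ2 : ∀ x y : R, Ψ (x * y + y * x) = x * Ψ y + Ψ y * x) :
    ∀ x z : R, (Ψ x * x - x * Ψ x) * z = z * (Ψ x * x - x * Ψ x) := by
  intro x z
  set u := x * z + z * x with hu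
  have h1 : Ψ u = Ψ x * z + z * Ψ x := hJ1 x z
  have e : Ψ x * u + u * Ψ x = x * (Ψ x * z + z * Ψ x) + (Ψ x * z + z * Ψ x) * x := by
    rw [← h1, ← hJ1 x u, hJ2 x u]
  rw [hu] at e
  linear_combination (norm := noncomm_ring) e
end

section
/- Let R be a 2-torsion free ring and Ψ : R → R a Jordan centralizer (additive with Ψ(xy + yx) = Ψ(x)y + yΨ(x) = xΨ(y) + Ψ(y)x for all x, y). Then Ψ(xc) = Ψ(x)c for every x ∈ R and every c ∈ Z(R). -/
/-- A Jordan centralizer on a 2-torsion free ring satisfies `Ψ (x c) = Ψ x * c`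
for every central element `c`. -/
theorem jordan_centralizer_central_mul
    {R : Type*} [NonUnitalRing R]
    (h2 : ∀ x : R, x + x = 0 → x = 0)
    (Ψ : R → R)
    (hadd : ∀ x y : R, Ψ (x + y) = Ψ x + Ψ y)
    (hJ1 : ∀ x y : R, Ψ (x * y + y * x) = Ψ x * y + y * Ψ x)
    (hJ2 : ∀ x y : R, Ψ (x * y + y * x) = x * Ψ y + Ψ y * x) :
    ∀ x c : R, (∀ z : R, c * z = z * c) → Ψ (x * c) = Ψ x * c := by
  intro x c hc
  have h := hJ1 x c
  rw [hc x, hadd, hc (Ψ x)] at h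
  apply sub_eq_zero.mp
  apply h2
  rw [sub_add_sub_comm, h, sub_self]
end

section
/- Let R be a 2-torsion free ring and Ψ : R → R a Jordan centralizer that maps Z(R) into Z(R). Then for every x ∈ R and c ∈ Z(R), [Ψ(x), x]·c = 0, where [a,b] = ab − ba. -/
/-- If a Jordan centralizer `Ψ` on a 2-torsion free ring maps the center into
itself, then `[Ψ x, x] · c = 0` for all `x` and all central `c`. -/
theorem jordan_centralizer_commutator_annihilates_center
    {R : Type*} [NonUnitalRing R]
    (h2 : ∀ x : R, x + x = 0 → x = 0)
    (Ψ : R → R)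
    (hadd : ∀ x y : R, Ψ (x + y) = Ψ x + Ψ y)
    (hJ1 : ∀ x y : R, Ψ (x * y + y * x) = Ψ x * y + y * Ψ x)
    (hJ2 : ∀ x y : R, Ψ (x * y + y * x) = x * Ψ y + Ψ y * x)
    (hZ : ∀ c : R, (∀ z : R, c * z = z * c) → (∀ z : R, Ψ c * z = z * Ψ c)) :
    ∀ (x c : R), (∀ z : R, c * z = z * c) → (Ψ x * x - x * Ψ x) * c = 0 := by
  intro x c hc
  have hZc := hZ c hc
  have key : Ψ x * c = x * Ψ c := by
    have h := (hJ1 x c).symm.trans (hJ2 x c)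
    rw [hc (Ψ x), hZc x] at h
    have h' : Ψ x * c - x * Ψ c + (Ψ x * c - x * Ψ c) = 0 := by
      rw [sub_add_sub_comm, h, sub_self]
    exact sub_eq_zero.mp (h2 _ h')
  have : (Ψ x * x - x * Ψ x) * c = 0 := by
    have e1 : Ψ x * x * c = x * Ψ x * c := by
      calc Ψ x * x * c = Ψ x * (x * c) := by rw [mul_assoc]
        _ = Ψ x * (c * x) := by rw [hc]
        _ = Ψ x * c * x := by rw [mul_assoc]
        _ = x * Ψ c * x := by rw [key]
        _ = x * (Ψ c * x) := by rw [mul_assoc]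
        _ = x * (x * Ψ c) := by rw [hZc]
        _ = x * (Ψ x * c) := by rw [key]
        _ = x * Ψ x * c := by rw [mul_assoc]
    rw [sub_mul, e1, sub_self]
  exact this
end

section
/- Let R be a 2-torsion free ring in which every central square-zero element is zero (c ∈ Z(R) and c² = 0 implies c = 0), and suppose Ψ : R → R is a Jordan centralizer mapping Z(R) into Z(R) such that [Ψ(x), x] ∈ Z(R) for all x. Then Ψ is a Jordan two-sided centralizer: Ψ(x²) = Ψ(x)x = xΨ(x) for all x ∈ R. -/
private lemma aux_id {R : Type*} [NonUnitalRing R] (a x : R)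
    (h1 : x * (a * x - x * a) = (a * x - x * a) * x) :
    (a * x + x * a) * (x * x) - (x * x) * (a * x + x * a)
      = (a * x - x * a) * (x * x) + (a * x - x * a) * (x * x)
        + ((a * x - x * a) * (x * x) + (a * x - x * a) * (x * x)) := by
  have hz : x * (a * x - x * a) - (a * x - x * a) * x = 0 := sub_eq_zero_of_eq h1
  have key : (a * x + x * a) * (x * x) - (x * x) * (a * x + x * a)
      - ((a * x - x * a) * (x * x) + (a * x - x * a) * (x * x)
        + ((a * x - x * a) * (x * x) + (a * x - x * a) * (x * x)))
      = (x * (a * x - x * a) - (a * x - x * a) * x) * x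
        + (x * (a * x - x * a) - (a * x - x * a) * x) * x
        + (x * (a * x - x * a) - (a * x - x * a) * x) * x
        + x * (x * (a * x - x * a) - (a * x - x * a) * x) := by
    noncomm_ring
  rw [hz, zero_mul, mul_zero, add_zero, add_zero, add_zero] at key
  exact sub_eq_zero.mp key

/-- If `R` is 2-torsion free with no nonzero central square-zero elements, and
`Ψ` is a Jordan centralizer mapping the center into itself with `[Ψ x, x]`
central for all `x`, then `Ψ` is a Jordan two-sided centralizer. -/
theorem jordan_centralizer_is_jordan_two_sided
    {R : Type*} [NonUnitalRing R]
    (h2 : ∀ x : R, x + x = 0 → x = 0)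
    (hnil : ∀ c : R, (∀ z : R, c * z = z * c) → c * c = 0 → c = 0)
    (Ψ : R → R)
    (hadd : ∀ x y : R, Ψ (x + y) = Ψ x + Ψ y)
    (hJ1 : ∀ x y : R, Ψ (x * y + y * x) = Ψ x * y + y * Ψ x)
    (hJ2 : ∀ x y : R, Ψ (x * y + y * x) = x * Ψ y + Ψ y * x)
    (hZ : ∀ c : R, (∀ z : R, c * z = z * c) → (∀ z : R, Ψ c * z = z * Ψ c))
    (hcomm : ∀ x z : R, (Ψ x * x - x * Ψ x) * z = z * (Ψ x * x - x * Ψ x)) :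
    ∀ x : R, Ψ (x * x) = Ψ x * x ∧ Ψ (x * x) = x * Ψ x := by
  intro x
  have hc : ∀ z : R, (Ψ x * x - x * Ψ x) * z = z * (Ψ x * x - x * Ψ x) := hcomm x
  have hsq : Ψ (x * x) + Ψ (x * x) = Ψ x * x + x * Ψ x := by
    have h := hJ1 x x
    rwa [hadd] at h
  have e3 : (Ψ (x*x) * (x*x) - (x*x) * Ψ (x*x)) + (Ψ (x*x) * (x*x) - (x*x) * Ψ (x*x))
      = (Ψ (x*x) + Ψ (x*x)) * (x*x) - (x*x) * (Ψ (x*x) + Ψ (x*x)) := by noncomm_ring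
  rw [hsq, aux_id (Ψ x) x ((hc x).symm)] at e3
  have hd := hcomm (x*x) (Ψ x)
  have e4 : ((Ψ x * x - x * Ψ x) * (x*x) + (Ψ x * x - x * Ψ x) * (x*x)
        + ((Ψ x * x - x * Ψ x) * (x*x) + (Ψ x * x - x * Ψ x) * (x*x))) * Ψ x
      = Ψ x * ((Ψ x * x - x * Ψ x) * (x*x) + (Ψ x * x - x * Ψ x) * (x*x)
        + ((Ψ x * x - x * Ψ x) * (x*x) + (Ψ x * x - x * Ψ x) * (x*x))) := by
    rw [← e3, add_mul, mul_add, hd]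
  have e5 : (((Ψ x * x - x * Ψ x) * (x*x) * Ψ x - Ψ x * ((Ψ x * x - x * Ψ x) * (x*x)))
      + ((Ψ x * x - x * Ψ x) * (x*x) * Ψ x - Ψ x * ((Ψ x * x - x * Ψ x) * (x*x))))
      + (((Ψ x * x - x * Ψ x) * (x*x) * Ψ x - Ψ x * ((Ψ x * x - x * Ψ x) * (x*x)))
      + ((Ψ x * x - x * Ψ x) * (x*x) * Ψ x - Ψ x * ((Ψ x * x - x * Ψ x) * (x*x)))) = 0 := by
    have h' : (((Ψ x * x - x * Ψ x) * (x*x) * Ψ x - Ψ x * ((Ψ x * x - x * Ψ x) * (x*x)))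
      + ((Ψ x * x - x * Ψ x) * (x*x) * Ψ x - Ψ x * ((Ψ x * x - x * Ψ x) * (x*x))))
      + (((Ψ x * x - x * Ψ x) * (x*x) * Ψ x - Ψ x * ((Ψ x * x - x * Ψ x) * (x*x)))
      + ((Ψ x * x - x * Ψ x) * (x*x) * Ψ x - Ψ x * ((Ψ x * x - x * Ψ x) * (x*x))))
        = ((Ψ x * x - x * Ψ x) * (x*x) + (Ψ x * x - x * Ψ x) * (x*x)
        + ((Ψ x * x - x * Ψ x) * (x*x) + (Ψ x * x - x * Ψ x) * (x*x))) * Ψ x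
      - Ψ x * ((Ψ x * x - x * Ψ x) * (x*x) + (Ψ x * x - x * Ψ x) * (x*x)
        + ((Ψ x * x - x * Ψ x) * (x*x) + (Ψ x * x - x * Ψ x) * (x*x))) := by
      noncomm_ring
    rw [h']
    exact sub_eq_zero_of_eq e4
  have hw : (Ψ x * x - x * Ψ x) * (x*x) * Ψ x = Ψ x * ((Ψ x * x - x * Ψ x) * (x*x)) :=
    sub_eq_zero.mp (h2 _ (h2 _ e5))
  have hcA : (Ψ x * x - x * Ψ x) * Ψ x = Ψ x * (Ψ x * x - x * Ψ x) := hc (Ψ x)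
  have e6 : (Ψ x * x - x * Ψ x) * ((x*x) * Ψ x) = (Ψ x * x - x * Ψ x) * (Ψ x * (x*x)) := by
    calc (Ψ x * x - x * Ψ x) * ((x*x) * Ψ x)
        = (Ψ x * x - x * Ψ x) * (x*x) * Ψ x := (mul_assoc _ _ _).symm
      _ = Ψ x * ((Ψ x * x - x * Ψ x) * (x*x)) := hw
      _ = Ψ x * (Ψ x * x - x * Ψ x) * (x*x) := (mul_assoc _ _ _).symm
      _ = (Ψ x * x - x * Ψ x) * Ψ x * (x*x) := by rw [← hcA]
      _ = (Ψ x * x - x * Ψ x) * (Ψ x * (x*x)) := mul_assoc _ _ _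
  have e7 : (Ψ x * x - x * Ψ x) * ((Ψ x * x - x * Ψ x) * x)
      + (Ψ x * x - x * Ψ x) * ((Ψ x * x - x * Ψ x) * x) = 0 := by
    have idd : (Ψ x * x - x * Ψ x) * (Ψ x * (x*x)) - (Ψ x * x - x * Ψ x) * ((x*x) * Ψ x)
        = (Ψ x * x - x * Ψ x) * ((Ψ x * x - x * Ψ x) * x)
          + (Ψ x * x - x * Ψ x) * (x * (Ψ x * x - x * Ψ x)) := by noncomm_ring
    rw [← hc x] at idd
    rw [← e6, sub_self] at idd
    exact idd.symm
  have e8 : (Ψ x * x - x * Ψ x) * ((Ψ x * x - x * Ψ x) * x) = 0 := h2 _ e7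
  have hcc : ∀ z : R, ((Ψ x * x - x * Ψ x) * (Ψ x * x - x * Ψ x)) * z
      = z * ((Ψ x * x - x * Ψ x) * (Ψ x * x - x * Ψ x)) := by
    intro z
    rw [mul_assoc, hc z, ← mul_assoc, hc z, mul_assoc]
  have hc3A : (((Ψ x * x - x * Ψ x) * (Ψ x * x - x * Ψ x)) * (Ψ x * x - x * Ψ x)) * Ψ x
      = Ψ x * (((Ψ x * x - x * Ψ x) * (Ψ x * x - x * Ψ x)) * (Ψ x * x - x * Ψ x)) := by
    rw [mul_assoc, hc (Ψ x), ← mul_assoc, hcc (Ψ x), mul_assoc]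
  have h9a : ((Ψ x * x - x * Ψ x) * (Ψ x * x - x * Ψ x))
      * ((Ψ x * x - x * Ψ x) * (Ψ x * x - x * Ψ x)) = 0 := by
    have h1 : ((Ψ x * x - x * Ψ x) * (Ψ x * x - x * Ψ x))
        * ((Ψ x * x - x * Ψ x) * (Ψ x * x - x * Ψ x))
        = (((Ψ x * x - x * Ψ x) * (Ψ x * x - x * Ψ x)) * (Ψ x * x - x * Ψ x)) * (Ψ x * x)
          - (((Ψ x * x - x * Ψ x) * (Ψ x * x - x * Ψ x)) * (Ψ x * x - x * Ψ x)) * (x * Ψ x) := by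
      noncomm_ring
    have t1 : (((Ψ x * x - x * Ψ x) * (Ψ x * x - x * Ψ x)) * (Ψ x * x - x * Ψ x)) * (Ψ x * x)
        = 0 := by
      calc (((Ψ x * x - x * Ψ x) * (Ψ x * x - x * Ψ x)) * (Ψ x * x - x * Ψ x)) * (Ψ x * x)
          = ((((Ψ x * x - x * Ψ x) * (Ψ x * x - x * Ψ x)) * (Ψ x * x - x * Ψ x)) * Ψ x) * x :=
            (mul_assoc _ _ _).symm
        _ = (Ψ x * (((Ψ x * x - x * Ψ x) * (Ψ x * x - x * Ψ x)) * (Ψ x * x - x * Ψ x))) * x := by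
            rw [hc3A]
        _ = Ψ x * ((Ψ x * x - x * Ψ x) * ((Ψ x * x - x * Ψ x) * ((Ψ x * x - x * Ψ x) * x))) := by
            noncomm_ring
        _ = 0 := by rw [e8, mul_zero, mul_zero]
    have t2 : (((Ψ x * x - x * Ψ x) * (Ψ x * x - x * Ψ x)) * (Ψ x * x - x * Ψ x)) * (x * Ψ x)
        = 0 := by
      calc (((Ψ x * x - x * Ψ x) * (Ψ x * x - x * Ψ x)) * (Ψ x * x - x * Ψ x)) * (x * Ψ x)
          = ((Ψ x * x - x * Ψ x) * ((Ψ x * x - x * Ψ x) * ((Ψ x * x - x * Ψ x) * x))) * Ψ x := by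
            noncomm_ring
        _ = 0 := by rw [e8, mul_zero, zero_mul]
    rw [h1, t1, t2, sub_zero]
  have hcc0 : (Ψ x * x - x * Ψ x) * (Ψ x * x - x * Ψ x) = 0 := hnil _ hcc h9a
  have hc0 : Ψ x * x - x * Ψ x = 0 := hnil _ hc hcc0
  have hxA : Ψ x * x = x * Ψ x := sub_eq_zero.mp hc0
  have e : Ψ (x*x) + Ψ (x*x) = Ψ x * x + Ψ x * x := by rw [hsq, ← hxA]
  have efin : (Ψ (x*x) - Ψ x * x) + (Ψ (x*x) - Ψ x * x) = 0 := by
    have h' : (Ψ (x*x) - Ψ x * x) + (Ψ (x*x) - Ψ x * x)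
        = (Ψ (x*x) + Ψ (x*x)) - (Ψ x * x + Ψ x * x) := by noncomm_ring
    rw [h', e, sub_self]
  have h1 : Ψ (x*x) = Ψ x * x := sub_eq_zero.mp (h2 _ efin)
  exact ⟨h1, h1.trans hxA⟩
end
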